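/- Let ε ∈ (0,1/2), let q be a prime power, and let T ⊆ F_n be a subset with |T| ≥ εn. The functions F_q^{F_n × F_n} → F_q given by x ↦ Π_{i∈T} x_{i,a(i)}, as a ranges over all univariate polynomials over F_n of degree < εn, are pairwise distinct monomial functions and are F_q-linearly independent. Consequently, the F_q-linear span of the evaluation functions of the partial derivatives of NW_{n,ε} (with coefficients in F_q) with respect to admissible sets has dimension at least n^{εn}. -/
import Mathlib


open MvPolynomial

noncomputable section

/-- Evaluation at `i` of the univariate polynomial with coefficient vector `a`. -/
def polyEval {Fn : Type*} [CommRing Fn] {d : ℕ} (a : Fin d → Fn) (i : Fn) : Fn :=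
  ∑ k : Fin d, a k * i ^ (k : ℕ)

/-- The Nisan–Wigderson polynomial over the coefficient field `K`. -/
def NW (Fn : Type*) [CommRing Fn] [Fintype Fn] (K : Type*) [CommSemiring K] (d : ℕ) :
    MvPolynomial (Fn × Fn) K :=
  ∑ a : Fin d → Fn, ∏ i : Fn, X (i, polyEval a i)

/-- Iterated partial derivative with respect to a finite set of variables. -/
def pderivFinset {σ : Type*} {K : Type*} [CommSemiring K] (D : Finset σ)
    (f : MvPolynomial σ K) : MvPolynomial σ K :=
  D.toList.foldr (fun v g => pderiv v g) f

set_option linter.unusedSectionVars false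
set_option linter.unusedVariables false
set_option linter.dupNamespace false

namespace NWaux
variable {Fn : Type*} [Field Fn] [Fintype Fn] [DecidableEq Fn]

def coeffPoly {d : ℕ} (a : Fin d → Fn) : Polynomial Fn :=
  ∑ k : Fin d, Polynomial.C (a k) * Polynomial.X ^ (k : ℕ)

lemma polyEval_eq_eval {d} (a : Fin d → Fn) (i : Fn) :
    polyEval a i = (coeffPoly a).eval i := by
  simp [polyEval, coeffPoly, Polynomial.eval_finset_sum]

lemma degree_coeffPoly_lt {d} (hd : 0 < d) (a : Fin d → Fn) :
    (coeffPoly a).degree < (d : ℕ) := by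
  apply lt_of_le_of_lt (Polynomial.degree_sum_le _ _)
  rw [Finset.sup_lt_iff (by exact_mod_cast WithBot.bot_lt_coe d)]
  intro k _
  refine lt_of_le_of_lt (Polynomial.degree_C_mul_X_pow_le _ _) ?_
  exact_mod_cast k.2

lemma coeff_coeffPoly {d} (a : Fin d → Fn) (k : Fin d) :
    (coeffPoly a).coeff k = a k := by
  rw [coeffPoly, Polynomial.finset_sum_coeff]
  rw [Finset.sum_eq_single k]
  · simp
  · intro b _ hb
    simp only [Polynomial.coeff_C_mul, Polynomial.coeff_X_pow]
    rw [if_neg (by simpa [Fin.val_injective.eq_iff, eq_comm] using hb), mul_zero]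
  · simp

lemma key_inj {d} (hd : 0 < d) (S : Finset Fn) (hS : d ≤ S.card) (a b : Fin d → Fn)
    (h : ∀ i ∈ S, polyEval a i = polyEval b i) : a = b := by
  have hp : coeffPoly a - coeffPoly b = 0 := by
    apply Polynomial.eq_zero_of_natDegree_lt_card_of_eval_eq_zero' _ S
    · intro i hi
      simp only [Polynomial.eval_sub, sub_eq_zero]
      rw [← polyEval_eq_eval, ← polyEval_eq_eval]
      exact h i hi
    · rcases eq_or_ne (coeffPoly a - coeffPoly b) 0 with h0 | h0
      · simpa [h0] using lt_of_lt_of_le hd hS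
      · refine lt_of_lt_of_le ?_ hS
        rw [Polynomial.natDegree_lt_iff_degree_lt h0]
        refine lt_of_le_of_lt (Polynomial.degree_sub_le _ _) ?_
        exact max_lt (degree_coeffPoly_lt hd a) (degree_coeffPoly_lt hd b)
  funext k
  have := congrArg (fun p => Polynomial.coeff p k) hp
  simpa [Polynomial.coeff_sub, coeff_coeffPoly, sub_eq_zero] using this

lemma key_surj {d} (hd : 0 < d) (S : Finset Fn) (hS : S.card ≤ d) (f : Fn → Fn) :
    ∃ a : Fin d → Fn, ∀ i ∈ S, polyEval a i = f i := by
  set p := Lagrange.interpolate S id f with hp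
  have hdeg : p.natDegree < d := by
    rcases eq_or_ne p 0 with h0 | h0
    · simpa [h0] using hd
    · rw [Polynomial.natDegree_lt_iff_degree_lt h0]
      refine lt_of_lt_of_le (Lagrange.degree_interpolate_lt _ (Set.injOn_id _)) ?_
      exact_mod_cast hS
  refine ⟨fun k => p.coeff k, fun i hi => ?_⟩
  have : polyEval (fun k : Fin d => p.coeff k) i = p.eval i := by
    rw [Polynomial.eval_eq_sum_range' hdeg, polyEval, Fin.sum_univ_eq_sum_range
      (fun k => p.coeff k * i ^ k)]
  rw [this, hp]
  exact Lagrange.eval_interpolate_at_node f (Set.injOn_id _) hi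

end NWaux

namespace NWaux2
open NWaux
variable {σ : Type*} [DecidableEq σ] {Fq : Type*} [Field Fq]

/-- the 0/1 indicator finsupp of a finset -/
def ind (E : Finset σ) : σ →₀ ℕ := ∑ v ∈ E, Finsupp.single v 1

lemma ind_apply (E : Finset σ) (w : σ) : ind E w = if w ∈ E then 1 else 0 := by
  classical
  rw [ind, Finset.sum_apply']
  simp [Finsupp.single_apply]

lemma support_ind (E : Finset σ) : (ind E).support = E := by
  ext v
  simp only [Finsupp.mem_support_iff, ind_apply]
  split <;> simp_all

lemma ind_sub_single {E : Finset σ} {w : σ} (hw : w ∈ E) :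
    ind E - Finsupp.single w 1 = ind (E.erase w) := by
  ext v
  rw [Finsupp.tsub_apply, ind_apply, ind_apply, Finsupp.single_apply]
  by_cases h1 : v ∈ E <;> by_cases h2 : w = v <;>
    simp_all [Finset.mem_erase, eq_comm]

lemma pderiv_monomial_ind (E : Finset σ) (w : σ) (c : Fq) :
    pderiv w (monomial (ind E) c) =
      if w ∈ E then monomial (ind (E.erase w)) c else 0 := by
  rw [pderiv_monomial]
  by_cases hw : w ∈ E
  · rw [if_pos hw, ind_sub_single hw, ind_apply, if_pos hw]; simp
  · rw [if_neg hw, ind_apply, if_neg hw]; simp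

lemma foldr_pderiv_monomial_ind (c : Fq) :
    ∀ (L : List σ), L.Nodup → ∀ E : Finset σ,
      L.foldr (fun v g => pderiv v g) (monomial (ind E) c) =
        if L.toFinset ⊆ E then monomial (ind (E \ L.toFinset)) c else 0
  | [], _, E => by simp
  | v :: L, h, E => by
    rw [List.foldr_cons, foldr_pderiv_monomial_ind c L (List.Nodup.of_cons h) E]
    have hv : v ∉ L.toFinset := by simpa using (List.nodup_cons.mp h).1
    simp only [List.toFinset_cons]
    by_cases hsub : L.toFinset ⊆ E
    · rw [if_pos hsub, pderiv_monomial_ind]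
      by_cases hvE : v ∈ E
      · have h1 : v ∈ E \ L.toFinset := Finset.mem_sdiff.mpr ⟨hvE, hv⟩
        have hEq : (E \ L.toFinset).erase v = E \ insert v L.toFinset := by
          ext u
          simp only [Finset.mem_erase, Finset.mem_sdiff, Finset.mem_insert]
          tauto
        rw [if_pos h1, if_pos (Finset.insert_subset_iff.mpr ⟨hvE, hsub⟩), hEq]
      · rw [if_neg (fun hc => hvE (Finset.mem_sdiff.mp hc).1),
          if_neg (fun hc => hvE (hc (Finset.mem_insert_self v _)))]
    · rw [if_neg hsub, map_zero,
        if_neg (fun hc => hsub ((Finset.subset_insert v _).trans hc))]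

lemma foldr_pderiv_sum {α : Type*} (L : List σ) (s : Finset α)
    (F : α → MvPolynomial σ Fq) :
    L.foldr (fun v g => pderiv v g) (∑ a ∈ s, F a) =
      ∑ a ∈ s, L.foldr (fun v g => pderiv v g) (F a) := by
  induction L with
  | nil => simp
  | cons v L ih => rw [List.foldr_cons, ih, map_sum]; rfl

lemma pderivFinset_sum {α : Type*} (D : Finset σ) (s : Finset α)
    (F : α → MvPolynomial σ Fq) :
    pderivFinset D (∑ a ∈ s, F a) = ∑ a ∈ s, pderivFinset D (F a) :=
  foldr_pderiv_sum _ _ _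

lemma pderivFinset_monomial_ind (D E : Finset σ) (c : Fq) :
    pderivFinset D (monomial (ind E) c) =
      if D ⊆ E then monomial (ind (E \ D)) c else 0 := by
  unfold pderivFinset
  rw [foldr_pderiv_monomial_ind c _ D.nodup_toList, Finset.toList_toFinset]

lemma prod_X_eq_monomial {α : Type*} (s : Finset α) (g : α → σ) :
    (∏ i ∈ s, (X (g i) : MvPolynomial σ Fq)) =
      monomial (∑ i ∈ s, Finsupp.single (g i) 1) 1 := by
  classical
  induction s using Finset.cons_induction with
  | empty => simp [monomial_zero']
  | cons a s ha ih =>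
      rw [Finset.prod_cons, ih, Finset.sum_cons, X, monomial_mul, one_mul]

lemma eval_monomial_ind (E : Finset σ) (x : σ → Fq) :
    eval x (monomial (ind E) (1 : Fq)) = ∏ v ∈ E, x v := by
  rw [eval_monomial, one_mul, Finsupp.prod, support_ind]
  refine Finset.prod_congr rfl fun v hv => ?_
  rw [ind_apply, if_pos hv, pow_one]

end NWaux2

namespace NWaux3
open NWaux NWaux2

variable {Fq : Type*} [Field Fq]

/-- generic linear independence of monomial functions with incomparable supports -/
lemma indep_monomials {ι σ : Type*} [Fintype ι] [DecidableEq σ]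
    (E : ι → Finset σ) (hE : ∀ p q : ι, E p ⊆ E q → p = q) :
    LinearIndependent Fq (fun p : ι => (fun x : σ → Fq => ∏ v ∈ E p, x v)) := by
  classical
  rw [Fintype.linearIndependent_iff]
  intro c hc p₀
  have hx := congrFun hc (fun v => if v ∈ E p₀ then (1 : Fq) else 0)
  simp only [Finset.sum_apply, Pi.smul_apply, smul_eq_mul, Pi.zero_apply] at hx
  rw [Finset.sum_eq_single p₀] at hx
  · rwa [Finset.prod_congr rfl (fun v hv => if_pos hv), Finset.prod_const_one,
      mul_one] at hx
  · intro b _ hb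
    have hexists : ∃ v ∈ E b, v ∉ E p₀ := by
      by_contra hcon
      push_neg at hcon
      exact hb (hE b p₀ hcon)
    obtain ⟨v, hv, hv'⟩ := hexists
    rw [Finset.prod_eq_zero hv (by simp [hv']), mul_zero]
  · intro h; exact absurd (Finset.mem_univ p₀) h

variable {Fn : Type*} [Field Fn] [Fintype Fn] [DecidableEq Fn]

/-- graph of a function on a finset -/
def graphF (c : Fn → Fn) (s : Finset Fn) : Finset (Fn × Fn) :=
  s.image (fun i => (i, c i))

lemma mem_graphF {c : Fn → Fn} {s : Finset Fn} {v : Fn × Fn} :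
    v ∈ graphF c s ↔ v.1 ∈ s ∧ c v.1 = v.2 := by
  obtain ⟨i, j⟩ := v
  simp only [graphF, Finset.mem_image, Prod.mk.injEq]
  constructor
  · rintro ⟨a, ha, rfl, rfl⟩; exact ⟨ha, rfl⟩
  · rintro ⟨hi, rfl⟩; exact ⟨i, hi, rfl, rfl⟩

lemma ind_graphF (c : Fn → Fn) (s : Finset Fn) :
    ind (graphF c s) = ∑ i ∈ s, Finsupp.single (i, c i) 1 := by
  rw [ind, graphF, Finset.sum_image]
  intro i _ j _ h
  exact congrArg Prod.fst h

lemma prod_X_graph (c : Fn → Fn) (s : Finset Fn) :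
    (∏ i ∈ s, (X (i, c i) : MvPolynomial (Fn × Fn) Fq)) =
      monomial (ind (graphF c s)) 1 := by
  rw [prod_X_eq_monomial, ind_graphF]

lemma graphF_subset_iff (b c : Fn → Fn) (R : Finset Fn) :
    graphF c R ⊆ graphF b Finset.univ ↔ ∀ i ∈ R, b i = c i := by
  constructor
  · intro h i hi
    have hv : (i, c i) ∈ graphF c R := mem_graphF.mpr ⟨hi, rfl⟩
    exact (mem_graphF.mp (h hv)).2
  · intro h v hv
    obtain ⟨h1, h2⟩ := mem_graphF.mp hv
    exact mem_graphF.mpr ⟨Finset.mem_univ _, by rw [h _ h1, h2]⟩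

lemma graphF_sdiff (b : Fn → Fn) (R : Finset Fn) :
    graphF b Finset.univ \ graphF b R = graphF b (Finset.univ \ R) := by
  ext v
  simp only [Finset.mem_sdiff, mem_graphF, Finset.mem_univ, true_and]
  tauto

lemma NW_eq_sum_monomial (d : ℕ) :
    NW Fn Fq d = ∑ a : Fin d → Fn,
      monomial (ind (graphF (polyEval a) Finset.univ)) 1 := by
  rw [NW]
  exact Finset.sum_congr rfl fun a _ => prod_X_graph _ _

lemma pderiv_NW (d : ℕ) (hd : 0 < d) (a₀ : Fin d → Fn) (R : Finset Fn)
    (hR : d ≤ R.card) :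
    pderivFinset (graphF (polyEval a₀) R) (NW Fn Fq d) =
      monomial (ind (graphF (polyEval a₀) (Finset.univ \ R))) 1 := by
  rw [NW_eq_sum_monomial, pderivFinset_sum]
  rw [Finset.sum_eq_single a₀]
  · rw [pderivFinset_monomial_ind,
      if_pos ((graphF_subset_iff _ _ _).mpr (fun i _ => rfl)), graphF_sdiff]
  · intro b _ hb
    rw [pderivFinset_monomial_ind, if_neg]
    intro hsub
    exact hb (key_inj hd R hR b a₀
      (fun i hi => (graphF_subset_iff (polyEval b) (polyEval a₀) R).mp hsub i hi))
  · intro h; exact absurd (Finset.mem_univ a₀) h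

end NWaux3

namespace NWaux3

lemma le_choose (n m : ℕ) (h1 : 1 ≤ m) (h2 : m ≤ n / 2) : n ≤ n.choose m := by
  induction m with
  | zero => omega
  | succ k ih =>
    rcases Nat.eq_or_lt_of_le h1 with h | h
    · rw [← h, Nat.choose_one_right]
    · have hk : 1 ≤ k := by omega
      have hk2 : k < n / 2 := by omega
      exact le_trans (ih hk (by omega)) (Nat.choose_le_succ_of_lt_half_left hk2)

lemma attach_image_eq {α β : Type*} [DecidableEq α] [DecidableEq β] (s : Finset α)
    (g : α → β) : s.attach.image (fun i => g i.1) = s.image g := by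
  conv_rhs => rw [← Finset.attach_image_val (s := s), Finset.image_image]
  rfl

end NWaux3

/-- Let `ε ∈ (0,1/2)` and `T ⊆ F_n` with `|T| ≥ εn`. The monomial functions
`F_q^{F_n × F_n} → F_q`, `x ↦ ∏_{i∈T} x_{i,a(i)}`, indexed by the univariate polynomials
`a` over `F_n` of degree `< εn` (encoded by coefficient vectors), are pairwise distinct
and `F_q`-linearly independent; consequently the `F_q`-span of the evaluation functions
of the partial derivatives of `NW_{n,ε}` (with coefficients in `F_q`) with respect to
admissible sets has dimension at least `n^(εn)`. -/
theorem NW_derivative_space_dimension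
    (n : ℕ) (Fn : Type*) [Field Fn] [Fintype Fn] [DecidableEq Fn]
    (hcard : Fintype.card Fn = n)
    (Fq : Type*) [Field Fq] [Fintype Fq]
    (ε : ℝ) (hε : ε ∈ Set.Ioo (0 : ℝ) (1 / 2))
    (T : Finset Fn) (hT : ε * n ≤ (T.card : ℝ)) :
    Function.Injective
      (fun a : Fin ⌈ε * n⌉₊ → Fn =>
        fun x : Fn × Fn → Fq => ∏ i ∈ T, x (i, polyEval a i)) ∧
    LinearIndependent Fq
      (fun a : Fin ⌈ε * n⌉₊ → Fn =>
        fun x : Fn × Fn → Fq => ∏ i ∈ T, x (i, polyEval a i)) ∧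
    (n : ℝ) ^ (ε * n) ≤
      (Module.finrank Fq ↥(Submodule.span Fq
        {g : (Fn × Fn → Fq) → Fq | ∃ (t : ℕ) (row col : Fin t → Fn),
          Function.Injective row ∧ ε * n ≤ (t : ℝ) ∧ t ≤ n ∧
          g = fun x => MvPolynomial.eval x
            (pderivFinset (Finset.image (fun k => (row k, col k)) Finset.univ)
              (NW Fn Fq ⌈ε * n⌉₊))}) : ℝ) := by
  classical
  obtain ⟨hε0, hε2⟩ := hε
  set d := ⌈ε * n⌉₊ with hd_def
  have hn2 : 2 ≤ n := by rw [← hcard]; exact Fintype.one_lt_card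
  have hn0 : (0 : ℝ) < n := by exact_mod_cast (by omega : 0 < n)
  have hεn_pos : 0 < ε * n := mul_pos hε0 hn0
  have hd_pos : 0 < d := Nat.ceil_pos.mpr hεn_pos
  have hεn_le_d : ε * n ≤ (d : ℝ) := Nat.le_ceil _
  have h2d : 2 * d ≤ n + 1 := by
    have h1 : (d : ℝ) < ε * n + 1 := Nat.ceil_lt_add_one (le_of_lt hεn_pos)
    have h2 : ε * n < (n : ℝ) / 2 := by nlinarith
    have h3 : ((2 * d : ℕ) : ℝ) < ((n + 2 : ℕ) : ℝ) := by push_cast; nlinarith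
    have h4 : 2 * d < n + 2 := by exact_mod_cast h3
    omega
  have hd_le_n : d ≤ n := by omega
  have hTd : d ≤ T.card := Nat.ceil_le.mpr hT
  -- Part 2 : linear independence of the T-monomials
  have hindepT : LinearIndependent Fq
      (fun a : Fin d → Fn =>
        fun x : Fn × Fn → Fq => ∏ i ∈ T, x (i, polyEval a i)) := by
    have hfam : (fun a : Fin d → Fn =>
          fun x : Fn × Fn → Fq => ∏ v ∈ NWaux3.graphF (polyEval a) T, x v)
        = fun a : Fin d → Fn =>
          fun x : Fn × Fn → Fq => ∏ i ∈ T, x (i, polyEval a i) := by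
      funext a x
      exact Finset.prod_image (fun i _ j _ h => congrArg Prod.fst h)
    rw [← hfam]
    refine NWaux3.indep_monomials _ (fun a b hsub => ?_)
    refine NWaux.key_inj hd_pos T hTd a b (fun i hi => ?_)
    have hv : (i, polyEval a i) ∈ NWaux3.graphF (polyEval a) T :=
      NWaux3.mem_graphF.mpr ⟨hi, rfl⟩
    exact ((NWaux3.mem_graphF.mp (hsub hv)).2).symm
  refine ⟨hindepT.injective, hindepT, ?_⟩
  -- Part 3
  set m := min d (n - d) with hm_def
  have hm_le_d : m ≤ d := min_le_left _ _
  have hm_le : m ≤ n - d := min_le_right _ _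
  have hd_le_nm : d ≤ n - m := by omega
  let ι := Σ s : {s : Finset Fn // s.card = m}, (↥(s.1) → Fn)
  let E : ι → Finset (Fn × Fn) :=
    fun p => p.1.1.attach.image (fun i => (i.1, p.2 i))
  have hEinj : ∀ p : ι, Set.InjOn (fun i : ↥(p.1.1) => (i.1, p.2 i))
      p.1.1.attach := fun p i _ j _ h => Subtype.ext (congrArg Prod.fst h)
  have hEcard : ∀ p, (E p).card = m := fun p => by
    rw [Finset.card_image_of_injOn (hEinj p), Finset.card_attach, p.1.2]
  have hrows : ∀ u : ι, (E u).image Prod.fst = u.1.1 := by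
    intro u
    show ((u.1.1.attach.image _).image _) = _
    rw [Finset.image_image]
    exact Finset.attach_image_val
  have hEsub : ∀ p q : ι, E p ⊆ E q → p = q := by
    rintro ⟨s, f⟩ ⟨t, g⟩ hsub
    have hEq : E ⟨s, f⟩ = E ⟨t, g⟩ :=
      Finset.eq_of_subset_of_card_le hsub
        (le_of_eq ((hEcard _).trans (hEcard _).symm))
    have hst : s = t := by
      refine Subtype.ext ?_
      rw [← hrows ⟨s, f⟩, ← hrows ⟨t, g⟩, hEq]
    subst hst
    suffices hfg : f = g by rw [hfg]
    funext i
    have hmem : (i.1, f i) ∈ E ⟨s, g⟩ := by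
      rw [← hEq]
      exact Finset.mem_image_of_mem _ (Finset.mem_attach _ i)
    obtain ⟨j, _, hj⟩ := Finset.mem_image.mp hmem
    have hji : j = i := Subtype.ext (congrArg Prod.fst hj)
    have h2 : g j = f i := (Prod.ext_iff.mp hj).2
    rw [hji] at h2
    exact h2.symm
  -- every monomial function is in the generating set
  have hmem : ∀ p : ι, (fun x : Fn × Fn → Fq => ∏ v ∈ E p, x v) ∈
      {g : (Fn × Fn → Fq) → Fq | ∃ (t : ℕ) (row col : Fin t → Fn),
        Function.Injective row ∧ ε * n ≤ (t : ℝ) ∧ t ≤ n ∧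
        g = fun x => MvPolynomial.eval x
          (pderivFinset (Finset.image (fun k => (row k, col k)) Finset.univ)
            (NW Fn Fq d))} := by
    rintro ⟨s, f⟩
    set f' : Fn → Fn := fun i => if h : i ∈ s.1 then f ⟨i, h⟩ else 0 with hf'
    obtain ⟨a₀, ha₀⟩ := NWaux.key_surj hd_pos s.1 (by rw [s.2]; exact hm_le_d) f'
    set R : Finset Fn := s.1ᶜ with hRdef
    have hRcard : R.card = n - m := by
      rw [Finset.card_compl, s.2, hcard]
    have hdR : d ≤ R.card := by omega
    refine ⟨R.card, fun k => ((R.equivFin.symm k : ↥R) : Fn),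
      fun k => polyEval a₀ ((R.equivFin.symm k : ↥R) : Fn), ?_, ?_, ?_, ?_⟩
    · exact fun k l h => R.equivFin.symm.injective (Subtype.ext h)
    · calc ε * n ≤ (d : ℝ) := hεn_le_d
        _ ≤ (R.card : ℝ) := by exact_mod_cast hdR
    · omega
    · have himg : Finset.image
          (fun k => (((R.equivFin.symm k : ↥R) : Fn),
            polyEval a₀ ((R.equivFin.symm k : ↥R) : Fn))) Finset.univ
          = NWaux3.graphF (polyEval a₀) R := by
        ext v
        simp only [Finset.mem_image, Finset.mem_univ, true_and, NWaux3.graphF]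
        constructor
        · rintro ⟨k, rfl⟩
          exact ⟨((R.equivFin.symm k : ↥R) : Fn), (R.equivFin.symm k).2, rfl⟩
        · rintro ⟨i, hi, rfl⟩
          exact ⟨R.equivFin ⟨i, hi⟩, by simp⟩
      rw [himg, NWaux3.pderiv_NW d hd_pos a₀ R hdR]
      have hcompl : Finset.univ \ R = s.1 := by
        rw [hRdef]
        ext i
        simp
      funext x
      rw [NWaux2.eval_monomial_ind, hcompl]
      have hsets : NWaux3.graphF (polyEval a₀) s.1 = E ⟨s, f⟩ := by
        show _ = s.1.attach.image (fun i => (i.1, f i))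
        rw [NWaux3.graphF]
        have : ∀ i : ↥(s.1), (i.1, f i) = (i.1, polyEval a₀ i.1) := by
          intro i
          have := ha₀ (i : Fn) i.2
          rw [this, hf']
          simp [i.2]
        rw [Finset.image_congr (fun i _ => this i)]
        exact (NWaux3.attach_image_eq s.1 (fun i => (i, polyEval a₀ i))).symm
      rw [← hsets]
  -- independence and dimension count
  have hG : LinearIndependent Fq
      (fun p : ι => fun x : Fn × Fn → Fq => ∏ v ∈ E p, x v) :=
    NWaux3.indep_monomials E hEsub
  set W := Submodule.span Fq
      {g : (Fn × Fn → Fq) → Fq | ∃ (t : ℕ) (row col : Fin t → Fn),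
        Function.Injective row ∧ ε * n ≤ (t : ℝ) ∧ t ≤ n ∧
        g = fun x => MvPolynomial.eval x
          (pderivFinset (Finset.image (fun k => (row k, col k)) Finset.univ)
            (NW Fn Fq d))} with hW
  have hGW : ∀ p : ι, (fun x : Fn × Fn → Fq => ∏ v ∈ E p, x v) ∈ W :=
    fun p => Submodule.subset_span (hmem p)
  let G' : ι → W := fun p => ⟨_, hGW p⟩
  have hG' : LinearIndependent Fq G' :=
    LinearIndependent.of_comp W.subtype (by exact hG)
  have hcardle : Fintype.card ι ≤ Module.finrank Fq W :=
    hG'.fintype_card_le_finrank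
  have hcardι : Fintype.card ι = Nat.choose n m * n ^ m := by
    rw [Fintype.card_sigma]
    have hfun : ∀ s : {s : Finset Fn // s.card = m},
        Fintype.card (↥(s.1) → Fn) = n ^ m := by
      intro s
      rw [Fintype.card_fun, Fintype.card_coe, s.2, hcard]
    rw [Finset.sum_congr rfl (fun s _ => hfun s), Finset.sum_const,
      Finset.card_univ, Fintype.card_finset_len, hcard, smul_eq_mul]
  have h1n : (1 : ℝ) ≤ n := by exact_mod_cast (by omega : 1 ≤ n)
  have key : (n : ℝ) ^ (ε * n) ≤ ((Nat.choose n m * n ^ m : ℕ) : ℝ) := by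
    rcases le_or_gt d (n - d) with hcase | hcase
    · have hmd : m = d := min_eq_left hcase
      have hcpos : 0 < Nat.choose n m := Nat.choose_pos (by omega)
      calc (n : ℝ) ^ (ε * n) ≤ (n : ℝ) ^ ((d : ℕ) : ℝ) :=
            Real.rpow_le_rpow_of_exponent_le h1n hεn_le_d
        _ = ((n ^ d : ℕ) : ℝ) := by rw [Real.rpow_natCast]; push_cast; ring
        _ ≤ ((Nat.choose n m * n ^ m : ℕ) : ℝ) := by
            rw [hmd] at hcpos ⊢
            exact_mod_cast Nat.le_mul_of_pos_left (n ^ d) hcpos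
    · have hmd : m = n - d := min_eq_right (le_of_lt hcase)
      have h1m : 1 ≤ m := by omega
      have hm2 : m ≤ n / 2 := by omega
      have hcb : n ≤ Nat.choose n m := NWaux3.le_choose n m h1m hm2
      have hεm : ε * n ≤ (m : ℝ) + 1 := by
        have hdm : d ≤ m + 1 := by omega
        calc ε * n ≤ (d : ℝ) := hεn_le_d
          _ ≤ (m : ℝ) + 1 := by exact_mod_cast hdm
      calc (n : ℝ) ^ (ε * n) ≤ (n : ℝ) ^ ((m : ℝ) + 1) :=
            Real.rpow_le_rpow_of_exponent_le h1n hεm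
        _ = ((n ^ (m + 1) : ℕ) : ℝ) := by
            rw [show ((m : ℝ) + 1) = ((m + 1 : ℕ) : ℝ) by push_cast; ring,
              Real.rpow_natCast]
            push_cast; ring
        _ ≤ ((Nat.choose n m * n ^ m : ℕ) : ℝ) := by
            have : n ^ (m + 1) ≤ Nat.choose n m * n ^ m := by
              calc n ^ (m + 1) = n * n ^ m := by ring
                _ ≤ Nat.choose n m * n ^ m := Nat.mul_le_mul_right _ hcb
            exact_mod_cast this
  calc (n : ℝ) ^ (ε * n) ≤ ((Nat.choose n m * n ^ m : ℕ) : ℝ) := key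
    _ ≤ (Module.finrank Fq W : ℝ) := by
        rw [← hcardι]; exact_mod_cast hcardle
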